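/- arXiv:1705.04735 — 6 statements merged into one kernel-verified Lean document; each statement's English description precedes it below -/
import Mathlib

section
/- Let G be a graph with no isolated vertex and H any graph. Then the weak Roman domination number of the lexicographic product satisfies γ_r(G∘H) ≤ 2·γ_t(G). -/
open Finset
open scoped Classical

/-- The lexicographic product of two simple graphs. -/
def lexProd {α β : Type*} (G : SimpleGraph α) (H : SimpleGraph β) :
    SimpleGraph (α × β) where
  Adj p q := G.Adj p.1 q.1 ∨ (p.1 = q.1 ∧ H.Adj p.2 q.2)
  symm := by
    constructor
    rintro ⟨a, b⟩ ⟨c, d⟩ (h | ⟨h1, h2⟩)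
    · exact Or.inl h.symm
    · exact Or.inr ⟨h1.symm, h2.symm⟩
  loopless := by
    constructor
    rintro ⟨a, b⟩ (h | ⟨h1, h2⟩)
    · exact G.irrefl h
    · exact H.irrefl h2

/-- A vertex `w` is undefended with respect to `g` if `g w = 0` and `g x = 0`
for every neighbour `x` of `w`. -/
def Undefended {α : Type*} (G : SimpleGraph α) (g : α → ℕ) (w : α) : Prop :=
  g w = 0 ∧ ∀ x, G.Adj w x → g x = 0

/-- A weak Roman dominating function. -/
def IsWRDF {α : Type*} (G : SimpleGraph α) (f : α → ℕ) : Prop :=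
  (∀ v, f v ≤ 2) ∧
    ∀ v, f v = 0 → ∃ u, G.Adj u v ∧ 1 ≤ f u ∧
      ∀ w, ¬ Undefended G (Function.update (Function.update f v 1) u (f u - 1)) w

/-- The weak Roman domination number. -/
noncomputable def weakRomanNumber {α : Type*} (G : SimpleGraph α) [Fintype α] : ℕ :=
  sInf {k | ∃ f : α → ℕ, IsWRDF G f ∧ ∑ v, f v = k}

/-- A dominating set. -/
def IsDomSet {α : Type*} (G : SimpleGraph α) (D : Finset α) : Prop :=
  ∀ v ∉ D, ∃ u ∈ D, G.Adj u v

/-- The domination number. -/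
noncomputable def domNumber {α : Type*} (G : SimpleGraph α) [Fintype α] : ℕ :=
  sInf {k | ∃ D : Finset α, IsDomSet G D ∧ D.card = k}

/-- A total dominating set. -/
def IsTotalDomSet {α : Type*} (G : SimpleGraph α) (S : Finset α) : Prop :=
  ∀ v, ∃ u ∈ S, G.Adj u v

/-- The total domination number. -/
noncomputable def totalDomNumber {α : Type*} (G : SimpleGraph α) [Fintype α] : ℕ :=
  sInf {k | ∃ S : Finset α, IsTotalDomSet G S ∧ S.card = k}

/-- A double total dominating set: every vertex has at least two neighbours in `S`. -/
def IsDoubleTotalDomSet {α : Type*} (G : SimpleGraph α) (S : Finset α) : Prop :=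
  ∀ v, ∃ u₁ ∈ S, ∃ u₂ ∈ S, u₁ ≠ u₂ ∧ G.Adj u₁ v ∧ G.Adj u₂ v

/-- The double total domination number. -/
noncomputable def doubleTotalDomNumber {α : Type*} (G : SimpleGraph α) [Fintype α] : ℕ :=
  sInf {k | ∃ S : Finset α, IsDoubleTotalDomSet G S ∧ S.card = k}

/-- A 2-packing: the closed neighbourhoods of distinct members are disjoint. -/
def IsTwoPacking {α : Type*} (G : SimpleGraph α) (X : Finset α) : Prop :=
  ∀ u ∈ X, ∀ v ∈ X, u ≠ v →
    ∀ w, ¬ ((w = u ∨ G.Adj u w) ∧ (w = v ∨ G.Adj v w))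

/-- The 2-packing number. -/
noncomputable def twoPackingNumber {α : Type*} (G : SimpleGraph α) [Fintype α] : ℕ :=
  sSup {k | ∃ X : Finset α, IsTwoPacking G X ∧ X.card = k}

/-- A secure dominating set. -/
def IsSecureDomSet {α : Type*} (G : SimpleGraph α) (S : Finset α) : Prop :=
  IsDomSet G S ∧ ∀ v ∉ S, ∃ u ∈ S, G.Adj u v ∧ IsDomSet G (insert v (S.erase u))

/-- The secure domination number. -/
noncomputable def secureDomNumber {α : Type*} (G : SimpleGraph α) [Fintype α] : ℕ :=
  sInf {k | ∃ S : Finset α, IsSecureDomSet G S ∧ S.card = k}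

/-- The corona product of two graphs. -/
def corona {α β : Type*} (G₁ : SimpleGraph α) (G₂ : SimpleGraph β) :
    SimpleGraph (α ⊕ α × β) where
  Adj x y :=
    match x, y with
    | .inl a, .inl a' => G₁.Adj a a'
    | .inl a, .inr p => a = p.1
    | .inr p, .inl a => p.1 = a
    | .inr p, .inr q => p.1 = q.1 ∧ G₂.Adj p.2 q.2
  symm := by
    constructor
    rintro (a | p) (a' | q) h
    · exact G₁.adj_symm h
    · exact h.symm
    · exact h.symm
    · exact ⟨h.1.symm, G₂.adj_symm h.2⟩
  loopless := by
    constructor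
    rintro (a | p) h
    · exact G₁.irrefl h
    · exact G₂.irrefl h.2


/-! Placing weight 2 on every vertex of a total dominating set gives a weak Roman dominating
function: after any defending move both endpoints carry weight at least 1, and every vertex still
has a neighbour in the set. In `G ∘ H` a total dominating set `S` of `G` lifts to the total
dominating set `S × {b}` of the same size. -/

section WeakRoman

variable {V : Type*} {K : SimpleGraph V}

lemma weakRomanNumber_le_of_isWRDF [Fintype V] {f : V → ℕ} (hf : IsWRDF K f) :
    weakRomanNumber K ≤ ∑ v, f v :=
  Nat.sInf_le ⟨f, hf, rfl⟩

lemma isWRDF_of_isTotalDomSet {D : Finset V} (hD : IsTotalDomSet K D) :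
    IsWRDF K fun v => if v ∈ D then 2 else 0 := by
  refine ⟨fun v => by dsimp only; split_ifs <;> omega, fun v hv => ?_⟩
  obtain ⟨u, huD, hadj⟩ := hD v
  refine ⟨u, hadj, by simp [huD], fun w hw => ?_⟩
  obtain ⟨x, hxD, hxw⟩ := hD w
  have hx := hw.2 x hxw.symm
  -- after the move `x` carries weight 1 if `x ∈ {u, v}` and 2 otherwise
  simp only [Function.update_apply, huD, hxD] at hx
  split_ifs at hx

lemma weakRomanNumber_le_two_mul_card [Fintype V] {D : Finset V} (hD : IsTotalDomSet K D) :
    weakRomanNumber K ≤ 2 * D.card := by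
  refine (weakRomanNumber_le_of_isWRDF (isWRDF_of_isTotalDomSet hD)).trans_eq ?_
  rw [Finset.sum_ite_mem, Finset.univ_inter, Finset.sum_const, smul_eq_mul, mul_comm]

end WeakRoman

lemma IsTotalDomSet.lexProd {α β : Type*} {G : SimpleGraph α} {S : Finset α}
    (hS : IsTotalDomSet G S) (H : SimpleGraph β) (b : β) :
    IsTotalDomSet (lexProd G H) (S ×ˢ {b}) := fun v => by
  obtain ⟨u, huS, hadj⟩ := hS v.1
  exact ⟨(u, b), Finset.mem_product.2 ⟨huS, Finset.mem_singleton_self b⟩, Or.inl hadj⟩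

lemma exists_isTotalDomSet_card_eq_totalDomNumber {α : Type*} [Fintype α] {G : SimpleGraph α}
    (hG : ∀ v : α, ∃ u, G.Adj v u) :
    ∃ S : Finset α, IsTotalDomSet G S ∧ S.card = totalDomNumber G :=
  Nat.sInf_mem (s := {k | ∃ S : Finset α, IsTotalDomSet G S ∧ S.card = k})
    ⟨_, Finset.univ, fun v => (hG v).imp fun u hu => ⟨Finset.mem_univ u, hu.symm⟩, rfl⟩

/-- If `G` has no isolated vertex, then
`γ_r(G∘H) ≤ 2·γ_t(G)`. -/
theorem weakRoman_lexProd_le_two_mul_totalDom {α β : Type*} [Fintype α] [Fintype β]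
    (G : SimpleGraph α) (H : SimpleGraph β)
    (hG : ∀ v : α, ∃ u, G.Adj v u) :
    weakRomanNumber (lexProd G H) ≤ 2 * totalDomNumber G := by
  obtain ⟨S, hS, hcard⟩ := exists_isTotalDomSet_card_eq_totalDomNumber hG
  rcases isEmpty_or_nonempty β with hβ | ⟨⟨b⟩⟩
  · have hempty : IsTotalDomSet (lexProd G H) ∅ := fun v => isEmptyElim v.2
    exact (weakRomanNumber_le_two_mul_card hempty).trans (by simp)
  · calc weakRomanNumber (lexProd G H) ≤ 2 * (S ×ˢ {b}).card :=
          weakRomanNumber_le_two_mul_card (hS.lexProd H b)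
      _ = 2 * totalDomNumber G := by
        rw [Finset.card_product, Finset.card_singleton, mul_one, hcard]
end

section
/- Let G be a graph of minimum degree at least two. Then: (i) γ_r(G) ≤ γ_{2,t}(G); (ii) for any graph H, γ_{2,t}(G∘H) ≤ γ_{2,t}(G); and (iii) for any graph H, γ_r(G∘H) ≤ γ_{2,t}(G). -/
open Finset
open scoped Classical

/-!
A double total dominating set `S` gives the weak Roman dominating function `1_S`: when a
vertex `v ∉ S` takes the guard of a neighbour `u ∈ S`, every vertex still has a neighbour in
`S \ {u}`, which keeps its guard. In `G ∘ H`, one copy `S × {b}` of `S` is already a double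
total dominating set, since `(a, c)` is adjacent to `(u, b)` whenever `a` is adjacent to `u`.
-/

namespace IsDoubleTotalDomSet

variable {α : Type*} {G : SimpleGraph α} {S : Finset α}

theorem exists_adj_ne (hS : IsDoubleTotalDomSet G S) (w u : α) :
    ∃ x ∈ S, x ≠ u ∧ G.Adj x w := by
  obtain ⟨x₁, hx₁, x₂, hx₂, hne, hadj₁, hadj₂⟩ := hS w
  by_cases h : x₁ = u
  · exact ⟨x₂, hx₂, fun h₂ => hne (h.trans h₂.symm), hadj₂⟩
  · exact ⟨x₁, hx₁, h, hadj₁⟩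

theorem isWRDF_indicator (hS : IsDoubleTotalDomSet G S) :
    IsWRDF G (fun v => if v ∈ S then 1 else 0) := by
  refine ⟨fun v => by by_cases h : v ∈ S <;> simp [h], fun v hv => ?_⟩
  have hvS : v ∉ S := by simpa using hv
  obtain ⟨u, huS, -, -, -, hadj, -⟩ := hS v
  refine ⟨u, hadj, by simp [huS], fun w ⟨_, hw⟩ => ?_⟩
  obtain ⟨x, hxS, hxu, hxw⟩ := hS.exists_adj_ne w u
  have hxv : x ≠ v := by rintro rfl; exact hvS hxS
  simpa [hxu, hxv, hxS] using hw x hxw.symm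

theorem weakRomanNumber_le_card [Fintype α] (hS : IsDoubleTotalDomSet G S) :
    weakRomanNumber G ≤ S.card :=
  Nat.sInf_le ⟨_, hS.isWRDF_indicator, by simp [Finset.sum_ite_mem]⟩

theorem doubleTotalDomNumber_le_card [Fintype α] (hS : IsDoubleTotalDomSet G S) :
    doubleTotalDomNumber G ≤ S.card :=
  Nat.sInf_le ⟨S, hS, rfl⟩

theorem exists_lexProd_card_le {β : Type*} (hS : IsDoubleTotalDomSet G S) (H : SimpleGraph β) :
    ∃ T : Finset (α × β), IsDoubleTotalDomSet (lexProd G H) T ∧ T.card ≤ S.card := by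
  cases isEmpty_or_nonempty β with
  | inl hβ => exact ⟨∅, fun p => hβ.elim p.2, by simp⟩
  | inr hβ =>
    obtain ⟨b⟩ := hβ
    refine ⟨S.image (·, b), fun ⟨a, _⟩ => ?_, Finset.card_image_le⟩
    obtain ⟨u₁, hu₁, u₂, hu₂, hne, hadj₁, hadj₂⟩ := hS a
    exact ⟨(u₁, b), Finset.mem_image_of_mem _ hu₁, (u₂, b), Finset.mem_image_of_mem _ hu₂,
      by simpa using hne, Or.inl hadj₁, Or.inl hadj₂⟩

end IsDoubleTotalDomSet

theorem isDoubleTotalDomSet_univ {α : Type*} [Fintype α] {G : SimpleGraph α}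
    (hG : ∀ v : α, ∃ u₁ u₂, u₁ ≠ u₂ ∧ G.Adj v u₁ ∧ G.Adj v u₂) :
    IsDoubleTotalDomSet G Finset.univ := fun v => by
  obtain ⟨u₁, u₂, hne, hadj₁, hadj₂⟩ := hG v
  exact ⟨u₁, Finset.mem_univ _, u₂, Finset.mem_univ _, hne, hadj₁.symm, hadj₂.symm⟩

theorem exists_isDoubleTotalDomSet_card_eq {α : Type*} [Fintype α] {G : SimpleGraph α}
    {S₀ : Finset α} (hS₀ : IsDoubleTotalDomSet G S₀) :
    ∃ S, IsDoubleTotalDomSet G S ∧ S.card = doubleTotalDomNumber G :=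
  Nat.sInf_mem (s := {k | ∃ S, IsDoubleTotalDomSet G S ∧ S.card = k})
    ⟨S₀.card, S₀, hS₀, rfl⟩

/-- If `G` has minimum degree at least two, then
(i) `γ_r(G) ≤ γ_{2,t}(G)`, (ii) `γ_{2,t}(G∘H) ≤ γ_{2,t}(G)` and
(iii) `γ_r(G∘H) ≤ γ_{2,t}(G)` for any graph `H`. -/
theorem weakRoman_and_doubleTotalDom_lexProd {α β : Type*} [Fintype α] [Fintype β]
    (G : SimpleGraph α) (H : SimpleGraph β)
    (hG : ∀ v : α, ∃ u₁ u₂, u₁ ≠ u₂ ∧ G.Adj v u₁ ∧ G.Adj v u₂) :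
    weakRomanNumber G ≤ doubleTotalDomNumber G ∧
    doubleTotalDomNumber (lexProd G H) ≤ doubleTotalDomNumber G ∧
    weakRomanNumber (lexProd G H) ≤ doubleTotalDomNumber G := by
  obtain ⟨S, hS, hcard⟩ := exists_isDoubleTotalDomSet_card_eq (isDoubleTotalDomSet_univ hG)
  obtain ⟨T, hT, hTS⟩ := hS.exists_lexProd_card_le H
  rw [← hcard]
  exact ⟨hS.weakRomanNumber_le_card, hT.doubleTotalDomNumber_le_card.trans hTS,
    hT.weakRomanNumber_le_card.trans hTS⟩
end

section
/- For any graph G of minimum degree δ ≥ 1 and any noncomplete graph H, γ_r(G∘H) ≥ max{γ_r(G), γ_t(G), 2·ρ(G)}. -/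
open Finset
open scoped Classical

/-! Let `f` be a minimum weak Roman dominating function of `G ∘ H` and `w u` the weight it puts
on the copy `{u} × V(H)`. If `a ≠ b` are nonadjacent in `H`, then `(u, a)` and `(u, b)` are
nonadjacent in `G ∘ H`, and a defence of one of them by a single unit of weight would leave the
other undefended; so every closed neighbourhood `N[u]` of `G` carries `w`-weight at least `2`.
Summed over a 2-packing this gives `2ρ(G) ≤ w(V)`; taking `u` whenever `w u ≥ 1`, together with a
neighbour of `u` whenever `w u ≥ 2`, gives a total dominating set of size at most `w(V)`; and
`min w 2` is a weak Roman dominating function of `G`. -/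

section Graph

variable {V : Type*} {G : SimpleGraph V}

theorem IsWRDF.two_le_sum_of_not_adj_of_eq_zero {f : V → ℕ} (hf : IsWRDF G f) {a b : V}
    (hab : a ≠ b) (hnadj : ¬ G.Adj a b) (ha : f a = 0) {S : Finset V}
    (hS : ∀ x, x = a ∨ G.Adj a x ∨ x = b ∨ G.Adj b x → x ∈ S) :
    2 ≤ ∑ x ∈ S, f x := by
  by_contra! hsum
  obtain ⟨u, hua, hu, hsafe⟩ := hf.2 a ha
  have hub : u ≠ b := by rintro rfl; exact hnadj hua.symm
  have huS : u ∈ S := hS u (Or.inr (Or.inl hua.symm))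
  have hzero : ∀ x ∈ S, x ≠ u → f x = 0 := fun x hx hxu => by
    have := add_le_sum (fun i _ => Nat.zero_le (f i)) hx huS hxu
    omega
  have hu1 : f u = 1 := by
    have := single_le_sum (fun i _ => Nat.zero_le (f i)) huS
    omega
  refine hsafe b ⟨?_, fun x hbx => ?_⟩
  · rw [Function.update_of_ne hub.symm, Function.update_of_ne hab.symm]
    exact hzero b (hS b (by simp)) hub.symm
  · have hxa : x ≠ a := by rintro rfl; exact hnadj hbx.symm
    by_cases hxu : x = u
    · rw [hxu, Function.update_self, hu1]
    · rw [Function.update_of_ne hxu, Function.update_of_ne hxa]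
      exact hzero x (hS x (by simp [hbx])) hxu

theorem IsWRDF.two_le_sum_of_not_adj {f : V → ℕ} (hf : IsWRDF G f) {a b : V}
    (hab : a ≠ b) (hnadj : ¬ G.Adj a b) {S : Finset V}
    (hS : ∀ x, x = a ∨ G.Adj a x ∨ x = b ∨ G.Adj b x → x ∈ S) :
    2 ≤ ∑ x ∈ S, f x := by
  by_cases ha : f a = 0
  · exact hf.two_le_sum_of_not_adj_of_eq_zero hab hnadj ha hS
  by_cases hb : f b = 0
  · exact hf.two_le_sum_of_not_adj_of_eq_zero hab.symm (fun h => hnadj h.symm) hb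
      fun x hx => hS x (by tauto)
  have := add_le_sum (fun i _ => Nat.zero_le (f i)) (hS a (by simp)) (hS b (by simp)) hab
  omega

theorem weakRomanNumber_le [Fintype V] {f : V → ℕ} (hf : IsWRDF G f) :
    weakRomanNumber G ≤ ∑ v, f v :=
  Nat.sInf_le ⟨f, hf, rfl⟩

theorem exists_isWRDF_sum_eq_weakRomanNumber [Fintype V] (G : SimpleGraph V) :
    ∃ f : V → ℕ, IsWRDF G f ∧ ∑ v, f v = weakRomanNumber G := by
  have hne : {k | ∃ f : V → ℕ, IsWRDF G f ∧ ∑ v, f v = k}.Nonempty :=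
    ⟨_, fun _ => 2, ⟨fun _ => le_rfl, fun _ h => absurd h two_ne_zero⟩, rfl⟩
  exact Nat.sInf_mem hne

theorem exists_isTwoPacking_card_eq_twoPackingNumber [Fintype V] (G : SimpleGraph V) :
    ∃ X : Finset V, IsTwoPacking G X ∧ X.card = twoPackingNumber G := by
  have hne : {k | ∃ X : Finset V, IsTwoPacking G X ∧ X.card = k}.Nonempty :=
    ⟨0, ∅, fun _ h => absurd h (notMem_empty _), card_empty⟩
  have hbdd : BddAbove {k | ∃ X : Finset V, IsTwoPacking G X ∧ X.card = k} :=
    ⟨Fintype.card V, by rintro _ ⟨X, -, rfl⟩; exact card_le_univ X⟩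
  exact Nat.sSup_mem hne hbdd

variable [Fintype V]

noncomputable def closedNbhd (G : SimpleGraph V) (u : V) : Finset V :=
  univ.filter fun p => p = u ∨ G.Adj u p

@[simp]
theorem mem_closedNbhd {u p : V} : p ∈ closedNbhd G u ↔ p = u ∨ G.Adj u p := by
  simp [closedNbhd]

theorem totalDomNumber_le_sum (hG : ∀ v, ∃ u, G.Adj v u) {w : V → ℕ}
    (hw : ∀ u, 2 ≤ ∑ p ∈ closedNbhd G u, w p) :
    totalDomNumber G ≤ ∑ u, w u := by
  choose nbr hnbr using hG
  let S := univ.filter fun u => 1 ≤ w u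
  let B := univ.filter fun u => 2 ≤ w u
  have hdom : IsTotalDomSet G (S ∪ B.image nbr) := by
    intro v
    by_cases hv : ∃ x, G.Adj v x ∧ 1 ≤ w x
    · obtain ⟨x, hvx, hx⟩ := hv
      exact ⟨x, mem_union_left _ (by simpa [S] using hx), hvx.symm⟩
    · push Not at hv
      have hv2 : 2 ≤ w v := by
        have hsingle : ∑ p ∈ closedNbhd G v, w p = w v := sum_eq_single v
          (fun p hp hpv => Nat.lt_one_iff.1 (hv p ((mem_closedNbhd.1 hp).resolve_left hpv)))
          (by simp)
        exact hsingle ▸ hw v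
      exact ⟨nbr v, mem_union_right _ (mem_image_of_mem _ (by simpa [B] using hv2)),
        (hnbr v).symm⟩
  calc totalDomNumber G ≤ (S ∪ B.image nbr).card := Nat.sInf_le ⟨_, hdom, rfl⟩
    _ ≤ S.card + B.card := (card_union_le _ _).trans (Nat.add_le_add_left card_image_le _)
    _ = ∑ u, ((if 1 ≤ w u then 1 else 0) + if 2 ≤ w u then 1 else 0) := by
      simp only [S, B, card_filter, sum_add_distrib]
    _ ≤ ∑ u, w u := sum_le_sum fun u _ => by split_ifs <;> omega

theorem two_mul_twoPackingNumber_le_sum {w : V → ℕ}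
    (hw : ∀ u, 2 ≤ ∑ p ∈ closedNbhd G u, w p) :
    2 * twoPackingNumber G ≤ ∑ u, w u := by
  obtain ⟨X, hX, hXcard⟩ := exists_isTwoPacking_card_eq_twoPackingNumber G
  have hdisj : (X : Set V).PairwiseDisjoint (closedNbhd G) := fun x hx y hy hxy =>
    disjoint_left.2 fun p hpx hpy =>
      hX x hx y hy hxy p ⟨mem_closedNbhd.1 hpx, mem_closedNbhd.1 hpy⟩
  calc 2 * twoPackingNumber G = ∑ _x ∈ X, 2 := by rw [sum_const, smul_eq_mul, hXcard, mul_comm]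
    _ ≤ ∑ x ∈ X, ∑ p ∈ closedNbhd G x, w p := sum_le_sum fun x _ => hw x
    _ = ∑ p ∈ X.biUnion (closedNbhd G), w p := (sum_biUnion hdisj).symm
    _ ≤ ∑ u, w u := sum_le_sum_of_subset (subset_univ _)

end Graph

section LexProd

variable {α β : Type*} {G : SimpleGraph α} {H : SimpleGraph β}

@[simp]
theorem lexProd_adj {p q : α × β} :
    (lexProd G H).Adj p q ↔ G.Adj p.1 q.1 ∨ p.1 = q.1 ∧ H.Adj p.2 q.2 :=
  Iff.rfl

theorem Undefended.lexProd {g : α → ℕ} {f : α × β → ℕ}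
    (hfg : ∀ p, g p = 0 → ∀ q, f (p, q) = 0) {z : α} (hz : Undefended G g z) (a : β) :
    Undefended (lexProd G H) f (z, a) := by
  refine ⟨hfg z hz.1 a, ?_⟩
  rintro ⟨p, q⟩ (hzp | ⟨rfl, -⟩)
  · exact hfg p (hz.2 p hzp) q
  · exact hfg _ hz.1 q

variable [Fintype β]

def fiberWeight (f : α × β → ℕ) (u : α) : ℕ :=
  ∑ c, f (u, c)

theorem sum_fiberWeight [Fintype α] (f : α × β → ℕ) : ∑ u, fiberWeight f u = ∑ p, f p :=
  (Fintype.sum_prod_type f).symm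

theorem apply_le_fiberWeight (f : α × β → ℕ) (u : α) (c : β) : f (u, c) ≤ fiberWeight f u :=
  single_le_sum (f := fun c => f (u, c)) (fun _ _ => Nat.zero_le _) (mem_univ c)

theorem add_le_fiberWeight (f : α × β → ℕ) (u : α) {c d : β} (hcd : c ≠ d) :
    f (u, c) + f (u, d) ≤ fiberWeight f u :=
  add_le_sum (f := fun c => f (u, c)) (fun _ _ => Nat.zero_le _) (mem_univ c) (mem_univ d) hcd

theorem fiberWeight_eq_zero_iff {f : α × β → ℕ} {u : α} :
    fiberWeight f u = 0 ↔ ∀ c, f (u, c) = 0 := by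
  simp [fiberWeight]

theorem IsWRDF.two_le_sum_closedNbhd_fiberWeight [Fintype α]
    (hH : ∃ a b : β, a ≠ b ∧ ¬ H.Adj a b) {f : α × β → ℕ} (hf : IsWRDF (lexProd G H) f)
    (u : α) : 2 ≤ ∑ p ∈ closedNbhd G u, fiberWeight f p := by
  obtain ⟨a, b, hab, hnadj⟩ := hH
  simp only [fiberWeight, ← sum_product]
  refine hf.two_le_sum_of_not_adj (a := (u, a)) (b := (u, b)) (by simpa using hab)
    (by simp [hnadj]) fun x hx => ?_
  simp only [lexProd_adj, mem_product, mem_closedNbhd, mem_univ, and_true] at hx ⊢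
  aesop

theorem IsWRDF.min_fiberWeight_two [Nonempty β] {f : α × β → ℕ}
    (hf : IsWRDF (lexProd G H) f) : IsWRDF G fun u => min (fiberWeight f u) 2 := by
  refine ⟨fun _ => min_le_right _ _, fun v hv => ?_⟩
  obtain ⟨a⟩ := ‹Nonempty β›
  have hv0 : ∀ c, f (v, c) = 0 := fiberWeight_eq_zero_iff.1 (by simp only at hv; omega)
  obtain ⟨⟨x, y⟩, hadj, hxy, hsafe⟩ := hf.2 (v, a) (hv0 a)
  have hxv : G.Adj x v := by
    rcases hadj with h | ⟨h, -⟩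
    · exact h
    · simp only at h
      subst h
      have := hv0 y
      omega
  have hxw := apply_le_fiberWeight f x y
  refine ⟨x, hxv, ?_, fun z hz => ?_⟩
  · show 1 ≤ min (fiberWeight f x) 2
    omega
  -- the move along `x v` in `G` is shadowed by the move along `(x, y) (v, a)` in `G ∘ H`
  refine hsafe (z, a) (Undefended.lexProd (fun p hp q => ?_) hz a)
  simp only [Function.update_apply, Prod.mk.injEq] at hp ⊢
  by_cases hpx : p = x
  · subst hpx
    by_cases hqy : q = y
    · simp only [hqy, and_self, if_true] at hp ⊢
      omega
    · have := add_le_fiberWeight f p hqy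
      simp only [↓reduceIte, hqy, and_false, hxv.ne, false_and] at hp ⊢
      omega
  · have hpv : p ≠ v := by rintro rfl; simp [hpx] at hp
    simp only [hpx, hpv, ↓reduceIte, false_and] at hp ⊢
    exact fiberWeight_eq_zero_iff.1 (by omega) q

end LexProd

/-- For any graph `G` of minimum degree at least one and any
noncomplete graph `H`, `γ_r(G∘H) ≥ max{γ_r(G), γ_t(G), 2·ρ(G)}`. -/
theorem weakRoman_lexProd_lower_bound {α β : Type*} [Fintype α] [Fintype β]
    (G : SimpleGraph α) (H : SimpleGraph β)
    (hG : ∀ v : α, ∃ u, G.Adj v u)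
    (hH : ∃ a b : β, a ≠ b ∧ ¬ H.Adj a b) :
    max (weakRomanNumber G) (max (totalDomNumber G) (2 * twoPackingNumber G)) ≤
      weakRomanNumber (lexProd G H) := by
  obtain ⟨f, hf, hsum⟩ := exists_isWRDF_sum_eq_weakRomanNumber (lexProd G H)
  have : Nonempty β := let ⟨a, _⟩ := hH; ⟨a⟩
  have hw := hf.two_le_sum_closedNbhd_fiberWeight hH
  rw [← hsum, ← sum_fiberWeight]
  refine max_le ?_ (max_le (totalDomNumber_le_sum hG hw) (two_mul_twoPackingNumber_le_sum hw))
  calc weakRomanNumber G ≤ ∑ u, min (fiberWeight f u) 2 := weakRomanNumber_le hf.min_fiberWeight_two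
    _ ≤ ∑ u, fiberWeight f u := sum_le_sum fun u _ => min_le_left _ _
end

section
/- Let G be a graph and H a noncomplete graph. For any vertex u ∈ V(G) and any weak Roman dominating function f on G∘H of minimum weight (a γ_r(G∘H)-function), the total weight assigned by f to the copies of H indexed by the closed neighbourhood of u is at least 2, i.e. Σ_{x ∈ N[u]} Σ_{v∈V(H)} f(x,v) ≥ 2. -/
open Finset
open scoped Classical

/-!
Two distinct nonadjacent vertices `p`, `q` whose closed neighbourhoods lie in a set `S` force
weight at least `2` on `S` under any WRDF: with weight at most `1` on `S`, a vertex of positive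
weight in `S` is the only possible defender of the other vertex, to which it is not adjacent;
and if `p` and `q` both have weight `0`, moving the unit of weight from the defender of `p` to `p`
leaves `q` undefended. In `G ∘ H` take `p = (u, a)`, `q = (u, b)` with `a`, `b` nonadjacent in `H`
and `S = N[u] × V(H)`.
-/

theorem add_le_one_of_sum_le_one {ι : Type*} {f : ι → ℕ} {S : Finset ι}
    (hS : ∑ x ∈ S, f x ≤ 1) {x y : ι} (hx : x ∈ S) (hy : y ∈ S) (hxy : x ≠ y) :
    f x + f y ≤ 1 :=
  (add_le_sum (fun _ _ => Nat.zero_le _) hx hy hxy).trans hS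

namespace IsWRDF

variable {V : Type*} {Γ : SimpleGraph V} {f : V → ℕ} {S : Finset V} {p q : V}

theorem eq_zero_of_not_adj (hf : IsWRDF Γ f) (hS : ∑ x ∈ S, f x ≤ 1) (hp : p ∈ S) (hq : q ∈ S)
    (hpq : p ≠ q) (hnadj : ¬ Γ.Adj p q) (hqS : ∀ x, Γ.Adj x q → x ∈ S) : f p = 0 := by
  by_contra hfp
  have hfq : f q = 0 := by have := add_le_one_of_sum_le_one hS hp hq hpq; omega
  obtain ⟨d, hdq, hfd, -⟩ := hf.2 q hfq
  have hdp : d ≠ p := by rintro rfl; exact hnadj hdq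
  have := add_le_one_of_sum_le_one hS (hqS d hdq) hp hdp
  omega

theorem ne_zero_or_ne_zero_of_not_adj (hf : IsWRDF Γ f) (hS : ∑ x ∈ S, f x ≤ 1)
    (hpq : p ≠ q) (hnadj : ¬ Γ.Adj p q) (hpS : ∀ x, Γ.Adj x p → x ∈ S)
    (hqS : ∀ x, Γ.Adj x q → x ∈ S) : f p ≠ 0 ∨ f q ≠ 0 := by
  by_contra! ⟨hfp, hfq⟩
  obtain ⟨d, hdp, hfd, hdefended⟩ := hf.2 p hfp
  have hdS := hpS d hdp
  have hdq : d ≠ q := by rintro rfl; omega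
  have hfd_one : f d = 1 := by
    have := (single_le_sum (fun _ _ => Nat.zero_le _) hdS).trans hS; omega
  refine hdefended q ⟨?_, fun x hqx => ?_⟩
  · rw [Function.update_of_ne hdq.symm, Function.update_of_ne hpq.symm, hfq]
  · have hxp : x ≠ p := by rintro rfl; exact hnadj hqx.symm
    by_cases hxd : x = d
    · rw [hxd, Function.update_self, hfd_one]
    · rw [Function.update_of_ne hxd, Function.update_of_ne hxp]
      have := add_le_one_of_sum_le_one hS (hqS x hqx.symm) hdS hxd
      omega

theorem two_le_sum_of_not_adj_s7 (hf : IsWRDF Γ f) (hp : p ∈ S) (hq : q ∈ S) (hpq : p ≠ q)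
    (hnadj : ¬ Γ.Adj p q) (hpS : ∀ x, Γ.Adj x p → x ∈ S) (hqS : ∀ x, Γ.Adj x q → x ∈ S) :
    2 ≤ ∑ x ∈ S, f x := by
  by_contra! hS
  replace hS : ∑ x ∈ S, f x ≤ 1 := by omega
  have hfp := hf.eq_zero_of_not_adj hS hp hq hpq hnadj hqS
  have hfq := hf.eq_zero_of_not_adj hS hq hp hpq.symm (fun h => hnadj h.symm) hpS
  exact (hf.ne_zero_or_ne_zero_of_not_adj hS hpq hnadj hpS hqS).elim (· hfp) (· hfq)

end IsWRDF

theorem lexProd_adj_fst {α β : Type*} {G : SimpleGraph α} {H : SimpleGraph β} {x : α × β}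
    {u : α} {y : β} (h : (lexProd G H).Adj x (u, y)) : x.1 = u ∨ G.Adj u x.1 :=
  h.elim (fun hG => Or.inr hG.symm) (fun hH => Or.inl hH.1)

theorem lexProd_not_adj {α β : Type*} {G : SimpleGraph α} {H : SimpleGraph β} (u : α)
    {a b : β} (h : ¬ H.Adj a b) : ¬ (lexProd G H).Adj (u, a) (u, b) :=
  fun hadj => hadj.elim G.irrefl (fun hH => h hH.2)

theorem weakRoman_lexProd_closedNbhd_weight_general {α β : Type*} [Fintype α] [Fintype β]
    (G : SimpleGraph α) (H : SimpleGraph β)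
    (hH : ∃ a b : β, a ≠ b ∧ ¬ H.Adj a b)
    (u : α) (f : α × β → ℕ)
    (hf : IsWRDF (lexProd G H) f) :
    2 ≤ ∑ x ∈ Finset.univ.filter (fun x => x = u ∨ G.Adj u x), ∑ v, f (x, v) := by
  obtain ⟨a, b, hab, hnadj⟩ := hH
  have hmem : ∀ {y : β} {x : α × β}, (lexProd G H).Adj x (u, y) →
      x ∈ Finset.univ.filter (fun x => x = u ∨ G.Adj u x) ×ˢ univ :=
    fun h => mem_product.2 ⟨mem_filter.2 ⟨mem_univ _, lexProd_adj_fst h⟩, mem_univ _⟩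
  rw [← sum_product]
  exact hf.two_le_sum_of_not_adj_s7 (by simp) (by simp) (by simpa using hab)
    (lexProd_not_adj u hnadj) (fun _ => hmem) (fun _ => hmem)

/-- For any vertex `u` of `G` and any `γ_r(G∘H)`-function `f`
(`H` noncomplete), the total weight that `f` assigns to the copies of `H`
indexed by the closed neighbourhood of `u` is at least `2`. -/
theorem weakRoman_lexProd_closedNbhd_weight {α β : Type*} [Fintype α] [Fintype β]
    (G : SimpleGraph α) (H : SimpleGraph β)
    (hH : ∃ a b : β, a ≠ b ∧ ¬ H.Adj a b)
    (u : α) (f : α × β → ℕ)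
    (hf : IsWRDF (lexProd G H) f)
    (hmin : ∑ p, f p = weakRomanNumber (lexProd G H)) :
    2 ≤ ∑ x ∈ Finset.univ.filter (fun x => x = u ∨ G.Adj u x), ∑ v, f (x, v) :=
  weakRoman_lexProd_closedNbhd_weight_general G H hH u f hf
end

section
/- For any graph G₁ with no isolated vertex and any noncomplete graph G₂, the corona product satisfies γ_r(G₁⊙G₂) = 2·γ_t(G₁⊙G₂) = 2·ρ(G₁⊙G₂). -/
open Finset
open scoped Classical

/-!
In `G₁ ⊙ G₂` the closed neighbourhood of a vertex of the `a`-th copy of `G₂` stays inside the block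
`{a} ∪ {a} × V(G₂)`, while every vertex lies in the closed neighbourhood of the vertex of `G₁`
heading its block. Two nonadjacent vertices in one copy of `G₂` force every weak Roman dominating
function to put weight `2` on each block, which `2` on each vertex of `G₁` attains:
`γ_r = 2 |V(G₁)|`. Likewise a total dominating set meets every block and a `2`-packing meets each
block at most once, and `V(G₁)` and one vertex per copy of `G₂` are extremal: `γ_t = ρ = |V(G₁)|`.
-/

section WeakRoman

variable {V : Type*} {G : SimpleGraph V} {f : V → ℕ}

lemma eq_zero_of_sum_le_one {B : Finset V} (hB : ∑ z ∈ B, f z ≤ 1) {u z : V} (hu : u ∈ B)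
    (hfu : 1 ≤ f u) (hz : z ∈ B) (hzu : z ≠ u) : f z = 0 := by
  have hpair := sum_le_sum_of_subset (f := f) (insert_subset hz (singleton_subset_iff.2 hu))
  rw [sum_pair hzu] at hpair
  omega

/-- With total weight at most `1` on `B`, the defender of `x` is the only weighted vertex of `B`;
after it moves to `x`, the vertex `y` and all its neighbours carry `0`. -/
theorem IsWRDF.two_le_sum (hf : IsWRDF G f) {B : Finset V} {x y : V} (hxy : x ≠ y)
    (hnadj : ¬ G.Adj x y) (hx : x ∈ B) (hy : y ∈ B) (hNx : ∀ z, G.Adj x z → z ∈ B)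
    (hNy : ∀ z, G.Adj y z → z ∈ B) : 2 ≤ ∑ z ∈ B, f z := by
  by_contra! hlt
  have hB : ∑ z ∈ B, f z ≤ 1 := by omega
  by_cases hfx : f x = 0
  · obtain ⟨u, hux, hfu, hdef⟩ := hf.2 x hfx
    have huB : u ∈ B := hNx u hux.symm
    have hfu1 : f u ≤ 1 := (single_le_sum (fun _ _ => Nat.zero_le _) huB).trans hB
    have hyu : y ≠ u := by rintro rfl; exact hnadj hux.symm
    refine hdef y ⟨?_, fun z hyz => ?_⟩
    · rw [Function.update_of_ne hyu, Function.update_of_ne hxy.symm]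
      exact eq_zero_of_sum_le_one hB huB hfu hy hyu
    · by_cases hzu : z = u
      · subst hzu
        rw [Function.update_self]
        omega
      · have hzx : z ≠ x := by rintro rfl; exact hnadj hyz.symm
        rw [Function.update_of_ne hzu, Function.update_of_ne hzx]
        exact eq_zero_of_sum_le_one hB huB hfu (hNy z hyz) hzu
  · have hfy : f y = 0 := eq_zero_of_sum_le_one hB hx (by omega) hy hxy.symm
    obtain ⟨u, huy, hfu, -⟩ := hf.2 y hfy
    have hux : u = x := by
      by_contra hux
      have := eq_zero_of_sum_le_one hB hx (by omega) (hNy u huy.symm) hux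
      omega
    exact hnadj (hux ▸ huy)

end WeakRoman

namespace corona

variable {α β : Type*} {G₁ : SimpleGraph α} {G₂ : SimpleGraph β}

def base : α ⊕ α × β → α := Sum.elim id Prod.fst

@[simp] lemma base_inr (p : α × β) : base (Sum.inr p : α ⊕ α × β) = p.1 := rfl

lemma base_eq_of_adj_inr {p : α × β} {w : α ⊕ α × β} (h : (corona G₁ G₂).Adj (Sum.inr p) w) :
    base w = p.1 := by
  rcases w with a | q
  · exact (h : p.1 = a).symm
  · exact (h : p.1 = q.1 ∧ G₂.Adj p.2 q.2).1.symm

lemma base_eq_of_eq_or_adj_inr {p : α × β} {w : α ⊕ α × β}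
    (h : w = Sum.inr p ∨ (corona G₁ G₂).Adj (Sum.inr p) w) : base w = p.1 := by
  rcases h with rfl | h
  · rfl
  · exact base_eq_of_adj_inr h

lemma inl_base_eq_or_adj (x : α ⊕ α × β) :
    Sum.inl (base x) = x ∨ (corona G₁ G₂).Adj x (Sum.inl (base x)) := by
  rcases x with a | p
  · exact Or.inl rfl
  · exact Or.inr (rfl : p.1 = p.1)

lemma not_undefended_of_inl_ne_zero {g : α ⊕ α × β → ℕ} (hg : ∀ a, g (Sum.inl a) ≠ 0)
    (w : α ⊕ α × β) : ¬ Undefended (corona G₁ G₂) g w := by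
  rintro ⟨hw, hnbr⟩
  rcases inl_base_eq_or_adj (G₁ := G₁) (G₂ := G₂) w with h | h
  · exact hg _ (h ▸ hw)
  · exact hg _ (hnbr _ h)

lemma isWRDF_two_on_inl :
    IsWRDF (corona G₁ G₂) (Sum.elim (fun _ => 2) fun _ => 0) := by
  refine ⟨by rintro (a | p) <;> simp, ?_⟩
  rintro (a | ⟨a, b⟩) hv
  · simp at hv
  refine ⟨Sum.inl a, rfl, by simp, not_undefended_of_inl_ne_zero fun a' => ?_⟩
  by_cases ha : a' = a
  · subst ha
    simp only [Function.update_self]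
    exact one_ne_zero
  · simp only [Function.update_of_ne (Sum.inl_injective.ne ha),
      Function.update_of_ne Sum.inl_ne_inr]
    exact two_ne_zero

variable [Fintype α] [Fintype β]

lemma two_le_sum_base_eq_of_isWRDF (h₂ : ∃ a b : β, a ≠ b ∧ ¬ G₂.Adj a b) {f : α ⊕ α × β → ℕ}
    (hf : IsWRDF (corona G₁ G₂) f) (a : α) : 2 ≤ ∑ x with base x = a, f x := by
  obtain ⟨b₁, b₂, hne, hnadj⟩ := h₂
  have hN : ∀ b z, (corona G₁ G₂).Adj (Sum.inr (a, b)) z → z ∈ univ.filter (base · = a) :=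
    fun _ _ h => by simpa using base_eq_of_adj_inr h
  exact hf.two_le_sum (x := Sum.inr (a, b₁)) (y := Sum.inr (a, b₂)) (by simpa using hne)
    (fun h => hnadj h.2) (by simp) (by simp) (hN b₁) (hN b₂)

theorem weakRomanNumber_eq (h₂ : ∃ a b : β, a ≠ b ∧ ¬ G₂.Adj a b) :
    weakRomanNumber (corona G₁ G₂) = 2 * Fintype.card α := by
  refine IsLeast.csInf_eq ⟨⟨_, isWRDF_two_on_inl, by simp [Fintype.sum_sum_type, mul_comm]⟩, ?_⟩
  rintro _ ⟨f, hf, rfl⟩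
  calc 2 * Fintype.card α = ∑ _ : α, 2 := by simp [mul_comm]
    _ ≤ ∑ a, ∑ x with base x = a, f x :=
      sum_le_sum fun a _ => two_le_sum_base_eq_of_isWRDF h₂ hf a
    _ = ∑ x, f x := sum_fiberwise univ base f

theorem totalDomNumber_eq [Nonempty β] (h₁ : ∀ v : α, ∃ u, G₁.Adj v u) :
    totalDomNumber (corona G₁ G₂) = Fintype.card α := by
  refine IsLeast.csInf_eq ⟨⟨univ.map .inl, ?_, by simp⟩, ?_⟩
  · rintro (a | ⟨a, b⟩)
    · obtain ⟨u, hu⟩ := h₁ a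
      exact ⟨Sum.inl u, by simp, hu.symm⟩
    · exact ⟨Sum.inl a, by simp, rfl⟩
  · rintro _ ⟨S, hS, rfl⟩
    obtain ⟨b⟩ := ‹Nonempty β›
    refine card_le_card_of_surjOn base fun a _ => ?_
    obtain ⟨u, hu, hadj⟩ := hS (Sum.inr (a, b))
    exact ⟨u, hu, base_eq_of_adj_inr hadj.symm⟩

theorem twoPackingNumber_eq [Nonempty β] :
    twoPackingNumber (corona G₁ G₂) = Fintype.card α := by
  obtain ⟨b⟩ := ‹Nonempty β›
  let e : α ↪ α ⊕ α × β := ⟨fun a => Sum.inr (a, b), fun _ _ h => by simpa using h⟩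
  refine IsGreatest.csSup_eq ⟨⟨univ.map e, ?_, by simp⟩, ?_⟩
  · intro _ hu _ hv hne w ⟨hw, hw'⟩
    obtain ⟨a, -, rfl⟩ := mem_map.1 hu
    obtain ⟨a', -, rfl⟩ := mem_map.1 hv
    exact hne <| congrArg e <|
      (base_eq_of_eq_or_adj_inr hw).symm.trans (base_eq_of_eq_or_adj_inr hw')
  · rintro _ ⟨X, hX, rfl⟩
    have hinj : Set.InjOn base (X : Set (α ⊕ α × β)) := fun x hx y hy hxy => by
      by_contra hne
      exact hX x hx y hy hne _ ⟨inl_base_eq_or_adj x, hxy ▸ inl_base_eq_or_adj y⟩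
    rw [← card_image_of_injOn hinj]
    exact card_le_univ _

end corona

/-- For any graph `G₁` with no isolated vertex and any
noncomplete graph `G₂`, `γ_r(G₁⊙G₂) = 2·γ_t(G₁⊙G₂) = 2·ρ(G₁⊙G₂)`. -/
theorem weakRoman_corona {α β : Type*} [Fintype α] [Fintype β]
    (G₁ : SimpleGraph α) (G₂ : SimpleGraph β)
    (h₁ : ∀ v : α, ∃ u, G₁.Adj v u)
    (h₂ : ∃ a b : β, a ≠ b ∧ ¬ G₂.Adj a b) :
    weakRomanNumber (corona G₁ G₂) = 2 * totalDomNumber (corona G₁ G₂) ∧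
    weakRomanNumber (corona G₁ G₂) = 2 * twoPackingNumber (corona G₁ G₂) := by
  have : Nonempty β := let ⟨b, _⟩ := h₂; ⟨b⟩
  rw [corona.weakRomanNumber_eq h₂, corona.totalDomNumber_eq h₁, corona.twoPackingNumber_eq]
  exact ⟨rfl, rfl⟩
end

section
/- Let G be a noncomplete graph. Then γ_r(G) = 2 if and only if γ(G) = 1 or γ_s(G) = 2. -/
open Finset
open scoped Classical

/-!
A weak Roman dominating function (WRDF) of weight 2 puts either 2 on one vertex, which then
dominates the graph, or 1 on each of two vertices. For the indicator of a set `S`, moving a guard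
from `u ∈ S` to `v ∉ S` gives the indicator of `S - u + v`, and an indicator leaves no vertex
undefended exactly when its set dominates; so a `{0,1}`-valued WRDF is the same thing as a secure
dominating set. Noncompleteness gives the lower bound 2: a WRDF of weight at most 1 would be the
indicator of a secure dominating set with at most one vertex, and a secure dominating singleton
`{u}` forces every `{v}` to dominate, i.e. the graph to be complete.
-/

lemma mem_of_sInf_eq_of_pos {s : Set ℕ} {k : ℕ} (h : sInf s = k) (hk : 0 < k) : k ∈ s :=
  h ▸ Nat.sInf_mem (Nat.nonempty_of_pos_sInf (h ▸ hk))

section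

variable {α : Type*} {G : SimpleGraph α}

lemma forall_not_undefended_indicator_iff (T : Finset α) :
    (∀ w, ¬ Undefended G ((T : Set α).indicator 1) w) ↔ IsDomSet G T := by
  simp [Undefended, IsDomSet, Set.indicator_apply, G.adj_comm, and_comm]

lemma update_update_indicator_eq {S : Finset α} {u v : α} (hu : u ∈ S) (hv : v ∉ S) :
    Function.update (Function.update ((S : Set α).indicator 1) v 1) u
        ((S : Set α).indicator 1 u - 1) =
      ((insert v (S.erase u) : Finset α) : Set α).indicator (1 : α → ℕ) := by
  have huv : u ≠ v := by rintro rfl; exact hv hu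
  ext x
  by_cases hxu : x = u
  · subst hxu; simp [hu, huv]
  · by_cases hxv : x = v
    · subst hxv; simp [hxu]
    · simp [Set.indicator_apply, hxu, hxv]

theorem isWRDF_indicator_iff (S : Finset α) :
    IsWRDF G ((S : Set α).indicator 1) ↔ IsSecureDomSet G S := by
  have hzero : ∀ v, (S : Set α).indicator 1 v = 0 ↔ v ∉ S := by simp [Set.indicator_apply]
  have hpos : ∀ u, 1 ≤ (S : Set α).indicator 1 u ↔ u ∈ S := fun u => by
    by_cases hu : u ∈ S <;> simp [hu]
  constructor
  · rintro ⟨-, hf⟩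
    have hsec : ∀ v ∉ S, ∃ u ∈ S, G.Adj u v ∧ IsDomSet G (insert v (S.erase u)) := by
      intro v hv
      obtain ⟨u, hadj, hu, hund⟩ := hf v ((hzero v).2 hv)
      have hu : u ∈ S := (hpos u).1 hu
      rw [update_update_indicator_eq hu hv, forall_not_undefended_indicator_iff] at hund
      exact ⟨u, hu, hadj, hund⟩
    exact ⟨fun v hv => (hsec v hv).imp fun u ⟨hu, hadj, _⟩ => ⟨hu, hadj⟩, hsec⟩
  · rintro ⟨-, hsec⟩
    refine ⟨fun v => by simp [Set.indicator_apply]; split <;> omega, fun v hv => ?_⟩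
    have hv : v ∉ S := (hzero v).1 hv
    obtain ⟨u, hu, hadj, hdom⟩ := hsec v hv
    refine ⟨u, hadj, (hpos u).2 hu, ?_⟩
    rwa [update_update_indicator_eq hu hv, forall_not_undefended_indicator_iff]

lemma IsDomSet.nonempty [Nonempty α] {D : Finset α} (hD : IsDomSet G D) : D.Nonempty := by
  by_contra h
  obtain ⟨u, hu, -⟩ := hD (Classical.arbitrary α) (by simp_all)
  exact h ⟨u, hu⟩

lemma eq_top_of_isSecureDomSet_singleton {u : α} (hu : IsSecureDomSet G {u}) : G = ⊤ := by
  have hadj : ∀ v ≠ u, G.Adj u v := fun v hv => by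
    simpa using hu.1 v (by simpa using hv)
  ext a b
  refine ⟨G.ne_of_adj, fun hab => ?_⟩
  by_cases ha : a = u
  · exact ha ▸ hadj b (ha ▸ Ne.symm hab)
  by_cases hb : b = u
  · exact hb ▸ (hadj a ha).symm
  obtain ⟨u', hu', -, hdom⟩ := hu.2 a (by simpa using ha)
  obtain rfl := Finset.mem_singleton.1 hu'
  simpa using hdom b (by simpa using Ne.symm hab)

lemma two_le_card_of_isSecureDomSet (hG : G ≠ ⊤) {S : Finset α} (hS : IsSecureDomSet G S) :
    2 ≤ S.card := by
  by_contra! h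
  obtain h | h : S.card = 0 ∨ S.card = 1 := by omega
  · obtain rfl := Finset.card_eq_zero.1 h
    refine hG (SimpleGraph.ext (funext fun a => ?_))
    obtain ⟨u, hu, -⟩ := hS.1 a (Finset.notMem_empty a)
    simp at hu
  · obtain ⟨u, rfl⟩ := Finset.card_eq_one.1 h
    exact hG (eq_top_of_isSecureDomSet_singleton hS)

lemma isWRDF_single_two [DecidableEq α] {u : α} (hu : IsDomSet G {u}) :
    IsWRDF G (Pi.single u 2) := by
  have hadj : ∀ v ≠ u, G.Adj u v := fun v hv => by
    simpa using hu v (by simpa using hv)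
  refine ⟨fun v => by by_cases hv : v = u <;> simp [hv], fun v hv => ?_⟩
  have hvu : v ≠ u := by rintro rfl; simp at hv
  refine ⟨u, hadj v hvu, by simp, ?_⟩
  rintro w ⟨hw, hwx⟩
  by_cases hwu : w = u
  · subst hwu; simp at hw
  by_cases hwv : w = v
  · subst hwv; simp [hwu] at hw
  simpa using hwx u (hadj w hwu).symm

variable [Fintype α]

lemma eq_indicator_support_of_le_one {f : α → ℕ} (hf : ∀ v, f v ≤ 1) :
    f = ((univ.filter (f · ≠ 0) : Finset α) : Set α).indicator 1 := by
  ext v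
  have := hf v
  by_cases hv : f v = 0 <;> simp [hv]
  omega

lemma sum_indicator_one (S : Finset α) :
    ∑ v, (S : Set α).indicator (1 : α → ℕ) v = S.card := by
  simp [Finset.sum_indicator_subset _ (Finset.subset_univ S)]

lemma IsWRDF.exists_isSecureDomSet_of_le_one {f : α → ℕ} (hf : IsWRDF G f)
    (hle : ∀ v, f v ≤ 1) : ∃ S : Finset α, IsSecureDomSet G S ∧ S.card = ∑ v, f v := by
  rw [eq_indicator_support_of_le_one hle] at hf ⊢
  exact ⟨_, (isWRDF_indicator_iff _).1 hf, (sum_indicator_one _).symm⟩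

lemma two_le_sum_of_isWRDF (hG : G ≠ ⊤) {f : α → ℕ} (hf : IsWRDF G f) : 2 ≤ ∑ v, f v := by
  by_contra! hsum
  have hle : ∀ v, f v ≤ 1 := fun v =>
    (Finset.single_le_sum (fun _ _ => Nat.zero_le _) (Finset.mem_univ v)).trans (by omega)
  obtain ⟨S, hS, hcard⟩ := hf.exists_isSecureDomSet_of_le_one hle
  have := two_le_card_of_isSecureDomSet hG hS
  omega

lemma IsWRDF.isDomSet_singleton_of_sum_eq {f : α → ℕ} (hf : IsWRDF G f) {u : α}
    (hu : ∑ v, f v = f u) : IsDomSet G {u} := by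
  have hzero : ∀ v ≠ u, f v = 0 := by
    have := Finset.add_sum_erase univ f (Finset.mem_univ u)
    intro v hv
    exact Finset.sum_eq_zero_iff.1 (show ∑ x ∈ univ.erase u, f x = 0 by omega) v
      (by simpa using hv)
  intro v hv
  obtain ⟨u', hadj, hu', -⟩ := hf.2 v (hzero v (by simpa using hv))
  obtain rfl : u' = u := by by_contra h; have := hzero u' h; omega
  exact ⟨u', by simp, hadj⟩

lemma domNumber_eq_one_of_isDomSet_singleton {u : α} (hu : IsDomSet G {u}) :
    domNumber G = 1 :=
  IsLeast.csInf_eq ⟨⟨{u}, hu, by simp⟩, by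
    rintro _ ⟨D, hD, rfl⟩
    have : Nonempty α := ⟨u⟩
    exact hD.nonempty.card_pos⟩

lemma weakRomanNumber_eq_two_of_isWRDF (hG : G ≠ ⊤) {f : α → ℕ} (hf : IsWRDF G f)
    (hsum : ∑ v, f v = 2) : weakRomanNumber G = 2 :=
  IsLeast.csInf_eq ⟨⟨f, hf, hsum⟩, by rintro _ ⟨g, hg, rfl⟩; exact two_le_sum_of_isWRDF hG hg⟩

lemma secureDomNumber_eq_two_of_isSecureDomSet (hG : G ≠ ⊤) {S : Finset α}
    (hS : IsSecureDomSet G S) (hcard : S.card = 2) : secureDomNumber G = 2 :=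
  IsLeast.csInf_eq ⟨⟨S, hS, hcard⟩, by
    rintro _ ⟨T, hT, rfl⟩; exact two_le_card_of_isSecureDomSet hG hT⟩

end

/-- For a noncomplete graph `G`, `γ_r(G) = 2` if and only if
`γ(G) = 1` or `γ_s(G) = 2`. -/
theorem weakRoman_eq_two_iff {α : Type*} [Fintype α] (G : SimpleGraph α)
    (hG : ∃ a b : α, a ≠ b ∧ ¬ G.Adj a b) :
    weakRomanNumber G = 2 ↔ (domNumber G = 1 ∨ secureDomNumber G = 2) := by
  have hne : G ≠ ⊤ := by
    rintro rfl
    obtain ⟨a, b, hab, hnadj⟩ := hG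
    exact hnadj hab
  constructor
  · intro h
    obtain ⟨f, hf, hsum⟩ := mem_of_sInf_eq_of_pos h two_pos
    by_cases htwo : ∃ u, f u = 2
    · obtain ⟨u, hu⟩ := htwo
      exact .inl (domNumber_eq_one_of_isDomSet_singleton (hf.isDomSet_singleton_of_sum_eq
        (hsum.trans hu.symm)))
    · have hle : ∀ v, f v ≤ 1 := fun v =>
        Nat.le_of_lt_succ ((hf.1 v).lt_of_ne fun h => htwo ⟨v, h⟩)
      obtain ⟨S, hS, hcard⟩ := hf.exists_isSecureDomSet_of_le_one hle
      exact .inr (secureDomNumber_eq_two_of_isSecureDomSet hne hS (hcard.trans hsum))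
  · rintro (h | h)
    · obtain ⟨D, hD, hcard⟩ := mem_of_sInf_eq_of_pos h one_pos
      obtain ⟨u, rfl⟩ := Finset.card_eq_one.1 hcard
      exact weakRomanNumber_eq_two_of_isWRDF hne (isWRDF_single_two hD) (by simp)
    · obtain ⟨S, hS, hcard⟩ := mem_of_sInf_eq_of_pos h two_pos
      exact weakRomanNumber_eq_two_of_isWRDF hne ((isWRDF_indicator_iff S).2 hS)
        (by rw [sum_indicator_one, hcard])
end
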